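/- The languages L₁ = {w ∈ {a,b}* : |w|_a = |w|_b} and L₂ = {w ∈ {a,b}* : |w|_b = 2·|w|_a} are each accepted by an nrDFAwtl, but their union L₁ ∪ L₂ is not accepted by any nrDFAwtl; hence the class of languages accepted by nrDFAwtls is not closed under union. -/

import Mathlib

/-- The end-of-tape behaviour of a non-returning automaton with translucent
letters: either a set of states to continue with (the empty set meaning that
the transition is undefined), or the operation `Accept`. -/
inductive EndMove (Q : Type) where
  | cont : Set Q → EndMove Q
  | accept : EndMove Q

/-- A nondeterministic finite automaton with translucent letters (NFAwtl).
`τ q` is the set of letters that are translucent for state `q`. -/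
structure NFAwtl (Q : Type) (A : Type) where
  τ : Q → Set A
  I : Set Q
  F : Set Q
  δ : Q → A → Set Q
  tr_compat : ∀ q a, a ∈ τ q → δ q a = ∅

namespace NFAwtl

variable {Q A : Type}

/-- A single computation step of an NFAwtl: the first letter (from the left)
that is not translucent for the current state is read and deleted. -/
inductive Step (M : NFAwtl Q A) : Q × List A → Q × List A → Prop
  | read (q q' : Q) (u v : List A) (a : A) :
      (∀ b ∈ u, b ∈ M.τ q) → a ∉ M.τ q → q' ∈ M.δ q a →
      Step M (q, u ++ a :: v) (q', u ++ v)

/-- The language accepted by an NFAwtl: words from which some computation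
reaches a configuration whose remaining tape contents is translucent for a
final state. -/
def lang (M : NFAwtl Q A) : Set (List A) :=
  { w | ∃ q₀ ∈ M.I, ∃ q w', Relation.ReflTransGen (Step M) (q₀, w) (q, w') ∧
        (∀ b ∈ w', b ∈ M.τ q) ∧ q ∈ M.F }

/-- An NFAwtl is deterministic (a DFAwtl) if it has a single initial state and
at most one transition for each state/letter pair. -/
def IsDet (M : NFAwtl Q A) : Prop :=
  (∃ q, M.I = {q}) ∧ ∀ q a, (M.δ q a).Subsingleton

end NFAwtl

/-- A configuration of a non-returning automaton with translucent letters: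
`conf x q w` means the tape contains `x ++ w` followed by the end-of-tape
marker, the current state is `q`, and the head is positioned at the first
letter of `w`; `accept` is the accepting halting configuration. -/
inductive NrConf (Q : Type) (A : Type) where
  | conf : List A → Q → List A → NrConf Q A
  | accept : NrConf Q A

/-- A non-returning nondeterministic finite automaton with translucent
letters (nrNFAwtl). -/
structure NrNFAwtl (Q : Type) (A : Type) where
  τ : Q → Set A
  I : Set Q
  δ : Q → A → Set Q
  δend : Q → EndMove Q
  tr_compat : ∀ q a, a ∈ τ q → δ q a = ∅

namespace NrNFAwtl

variable {Q A : Type}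

/-- A single computation step of an nrNFAwtl. -/
inductive Step (M : NrNFAwtl Q A) : NrConf Q A → NrConf Q A → Prop
  | read (x : List A) (q q' : Q) (u v : List A) (a : A) :
      (∀ b ∈ u, b ∈ M.τ q) → a ∉ M.τ q → q' ∈ M.δ q a →
      Step M (.conf x q (u ++ a :: v)) (.conf (x ++ u) q' v)
  | restart (x w : List A) (q q' : Q) (S : Set Q) :
      (∀ b ∈ w, b ∈ M.τ q) → M.δend q = .cont S → q' ∈ S →
      Step M (.conf x q w) (.conf [] q' (x ++ w))
  | accept (x w : List A) (q : Q) :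
      (∀ b ∈ w, b ∈ M.τ q) → M.δend q = .accept →
      Step M (.conf x q w) .accept

/-- The language accepted by an nrNFAwtl. -/
def lang (M : NrNFAwtl Q A) : Set (List A) :=
  { w | ∃ q₀ ∈ M.I, Relation.ReflTransGen (Step M) (.conf [] q₀ w) .accept }

/-- An nrNFAwtl is deterministic (an nrDFAwtl) if it has a single initial
state and, for every state and every letter (including the end-of-tape
marker), at most one transition is available. -/
def IsDet (M : NrNFAwtl Q A) : Prop :=
  (∃ q, M.I = {q}) ∧ (∀ q a, (M.δ q a).Subsingleton) ∧
  (∀ q S, M.δend q = .cont S → S.Subsingleton)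

end NrNFAwtl

/-- `L` is accepted by some NFAwtl. -/
def AcceptedByNFAwtl {A : Type} [Fintype A] (L : Set (List A)) : Prop :=
  ∃ (Q : Type) (_ : Fintype Q) (M : NFAwtl Q A), M.lang = L

/-- `L` is accepted by some DFAwtl. -/
def AcceptedByDFAwtl {A : Type} [Fintype A] (L : Set (List A)) : Prop :=
  ∃ (Q : Type) (_ : Fintype Q) (M : NFAwtl Q A), M.IsDet ∧ M.lang = L

/-- `L` is accepted by some nrNFAwtl. -/
def AcceptedByNrNFAwtl {A : Type} [Fintype A] (L : Set (List A)) : Prop :=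
  ∃ (Q : Type) (_ : Fintype Q) (M : NrNFAwtl Q A), M.lang = L

/-- `L` is accepted by some nrDFAwtl. -/
def AcceptedByNrDFAwtl {A : Type} [Fintype A] (L : Set (List A)) : Prop :=
  ∃ (Q : Type) (_ : Fintype Q) (M : NrNFAwtl Q A), M.IsDet ∧ M.lang = L

/-- The two-letter alphabet `{a, b}`. -/
inductive Γ2 : Type
  | a | b
deriving DecidableEq

instance : Fintype Γ2 :=
  ⟨{Γ2.a, Γ2.b}, fun x => by cases x <;> simp⟩


open Relation

/-! ### Generic helpers -/

lemma exists_first_split {α : Type} (l : List α) (c : α) (h : c ∈ l) :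
    ∃ u v, l = u ++ c :: v ∧ ∀ x ∈ u, x ≠ c := by
  induction l with
  | nil => cases h
  | cons d t ih =>
    by_cases hd : d = c
    · exact ⟨[], t, by simp [hd], by simp⟩
    · obtain ⟨u, v, h1, h2⟩ := ih (by
        rcases List.mem_cons.mp h with h' | h'
        · exact absurd h'.symm hd
        · exact h')
      refine ⟨d :: u, v, by rw [h1]; rfl, ?_⟩
      intro x hx
      rcases List.mem_cons.mp hx with rfl | hx
      · exact hd
      · exact h2 x hx

/-! ### The machine M1 accepting L₁ -/

inductive M1St : Type
  | p0 | p1 | p1b | p2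
deriving DecidableEq

instance : Fintype M1St :=
  ⟨{M1St.p0, M1St.p1, M1St.p1b, M1St.p2}, fun x => by cases x <;> simp⟩

namespace M1sec

open M1St

def M1 : NrNFAwtl M1St Γ2 where
  τ q := match q with
    | p0 => ∅
    | p1 => {Γ2.a}
    | p1b => {Γ2.b}
    | p2 => Set.univ
  I := {p0}
  δ q c := match q, c with
    | p0, Γ2.a => {p1}
    | p0, Γ2.b => {p1b}
    | p1, Γ2.b => {p2}
    | p1b, Γ2.a => {p2}
    | _, _ => ∅
  δend q := match q with
    | p0 => .accept
    | p2 => .cont {p0}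
    | _ => .cont ∅
  tr_compat := by
    intro q c h
    cases q <;> cases c <;> simp_all

lemma M1_det : M1.IsDet := by
  refine ⟨⟨p0, rfl⟩, ?_, ?_⟩
  · intro q c
    cases q <;> cases c <;>
      first
        | exact Set.subsingleton_empty
        | exact Set.subsingleton_singleton
  · intro q S h
    cases q <;> simp [M1] at h <;> rw [← h] <;>
      first
        | exact Set.subsingleton_empty
        | exact Set.subsingleton_singleton

/-- letter balance: +1 for an `a`, −1 for a `b` -/
def balc : Γ2 → ℤ
  | Γ2.a => 1
  | Γ2.b => -1

def bal (w : List Γ2) : ℤ := (w.map balc).sum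

lemma bal_step (x u v : List Γ2) (ch : Γ2) :
    bal (x ++ (u ++ ch :: v)) = bal (x ++ u ++ v) + balc ch := by
  simp [bal, List.sum_append]
  ring

lemma bal_append (x y : List Γ2) : bal (x ++ y) = bal x + bal y := by
  simp [bal]

lemma bal_counts (w : List Γ2) :
    bal w = (w.count Γ2.a : ℤ) - (w.count Γ2.b : ℤ) := by
  induction w with
  | nil => simp [bal]
  | cons c t ih =>
    cases c <;>
      simp [bal, balc, List.count_cons] at ih ⊢ <;> omega

def off1 : M1St → ℤ
  | p0 => 0
  | p1 => 1
  | p1b => -1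
  | p2 => 0

def Inv1 (D : ℤ) : NrConf M1St Γ2 → Prop
  | .conf x q w => bal (x ++ w) + off1 q = D ∧ (q = p0 → x = [])
  | .accept => D = 0

lemma inv1_read_aux {D : ℤ} {x u v : List Γ2} {ch : Γ2} {q q' : M1St}
    (hb : bal (x ++ (u ++ ch :: v)) + off1 q = D)
    (hoff : off1 q' = off1 q + balc ch) :
    bal (x ++ u ++ v) + off1 q' = D := by
  rw [bal_step] at hb
  linarith

lemma M1_step_inv {D : ℤ} {c c' : NrConf M1St Γ2} (h : M1.Step c c')
    (hI : Inv1 D c) : Inv1 D c' := by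
  cases h with
  | read x q q' u v ch htr hnt hδ =>
    obtain ⟨hb, hx⟩ := hI
    cases q with
    | p0 =>
      have hu : u = [] := by
        cases u with
        | nil => rfl
        | cons d t => exact absurd (htr d (by simp)) (by simp [M1])
      subst hu
      cases ch with
      | a =>
        have hq' : q' = p1 := by simpa [M1] using hδ
        subst hq'
        exact ⟨inv1_read_aux hb (by norm_num [off1, balc]), by simp⟩
      | b =>
        have hq' : q' = p1b := by simpa [M1] using hδ
        subst hq'
        exact ⟨inv1_read_aux hb (by norm_num [off1, balc]), by simp⟩
    | p1 =>
      cases ch with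
      | a => exact absurd hδ (by simp [M1])
      | b =>
        have hq' : q' = p2 := by simpa [M1] using hδ
        subst hq'
        exact ⟨inv1_read_aux hb (by norm_num [off1, balc]), by simp⟩
    | p1b =>
      cases ch with
      | b => exact absurd hδ (by simp [M1])
      | a =>
        have hq' : q' = p2 := by simpa [M1] using hδ
        subst hq'
        exact ⟨inv1_read_aux hb (by norm_num [off1, balc]), by simp⟩
    | p2 =>
      cases ch <;> exact absurd hδ (by simp [M1])
  | restart x w q q' S htr hend hmem =>
    obtain ⟨hb, hx⟩ := hI
    cases q with
    | p0 => exact absurd hend (by simp [M1])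
    | p1 =>
      have hS : S = ∅ :=
        (EndMove.cont.inj (show EndMove.cont (∅ : Set M1St) = .cont S from hend)).symm
      subst hS; exact absurd hmem (by simp)
    | p1b =>
      have hS : S = ∅ :=
        (EndMove.cont.inj (show EndMove.cont (∅ : Set M1St) = .cont S from hend)).symm
      subst hS; exact absurd hmem (by simp)
    | p2 =>
      have hS : S = {p0} :=
        (EndMove.cont.inj (show EndMove.cont ({p0} : Set M1St) = .cont S from hend)).symm
      subst hS
      have hq' : q' = p0 := hmem
      subst hq'
      refine ⟨?_, fun _ => rfl⟩
      simpa [off1] using hb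
  | accept x w q htr hend =>
    obtain ⟨hb, hx⟩ := hI
    cases q with
    | p0 =>
      have hw : w = [] := by
        cases w with
        | nil => rfl
        | cons d t => exact absurd (htr d (by simp)) (by simp [M1])
      have hx' : x = [] := hx rfl
      subst hw; subst hx'
      exact (by simpa [bal, off1] using hb : (0:ℤ) = D).symm
    | p1 => exact absurd hend (by simp [M1])
    | p1b => exact absurd hend (by simp [M1])
    | p2 => exact absurd hend (by simp [M1])

lemma M1_rtg_inv {D : ℤ} {c c' : NrConf M1St Γ2}
    (h : ReflTransGen M1.Step c c') (hI : Inv1 D c) : Inv1 D c' := by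
  induction h with
  | refl => exact hI
  | tail _ hstep ih => exact M1_step_inv hstep ih

lemma M1_complete : ∀ n (w : List Γ2), w.length = n →
    w.count Γ2.a = w.count Γ2.b →
    ReflTransGen M1.Step (.conf [] p0 w) .accept := by
  intro n
  induction n using Nat.strong_induction_on with
  | _ n ih =>
    intro w hlen hcnt
    cases w with
    | nil =>
      exact ReflTransGen.single
        (NrNFAwtl.Step.accept [] [] p0 (by simp) rfl)
    | cons c w' =>
      cases c with
      | a =>
        have hbmem : Γ2.b ∈ w' := by
          have : 0 < w'.count Γ2.b := by
            simp [List.count_cons] at hcnt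
            omega
          exact List.count_pos_iff.mp this
        obtain ⟨u, v, huv, hu⟩ := exists_first_split w' Γ2.b hbmem
        have hua : ∀ x ∈ u, x = Γ2.a := by
          intro x hx; cases x
          · rfl
          · exact absurd rfl (hu _ hx)
        have s1 : M1.Step (.conf [] p0 (Γ2.a :: w')) (.conf [] p1 w') := by
          have := NrNFAwtl.Step.read (M := M1) [] p0 p1 [] w' Γ2.a
            (by simp) (by simp [M1]) (by simp [M1])
          simpa using this
        have s2 : M1.Step (.conf [] p1 w') (.conf u p2 v) := by
          rw [huv]
          have := NrNFAwtl.Step.read (M := M1) [] p1 p2 u v Γ2.b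
            (by intro x hx; simp [M1, hua x hx]) (by simp [M1]) (by simp [M1])
          simpa using this
        have s3 : M1.Step (.conf u p2 v) (.conf [] p0 (u ++ v)) := by
          exact NrNFAwtl.Step.restart u v p2 p0 {p0}
            (by intro x hx; simp [M1]) rfl rfl
        have hrec : ReflTransGen M1.Step (.conf [] p0 (u ++ v)) .accept := by
          apply ih (u ++ v).length _ (u ++ v) rfl
          · have hcu : u.count Γ2.a = u.length ∧ u.count Γ2.b = 0 := by
              constructor
              · exact List.count_eq_length.mpr (fun x hx => (hua x hx).symm)
              · exact List.count_eq_zero.mpr (fun hmem => (hu _ hmem) rfl)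
            have := hcnt
            rw [huv] at this
            simp [List.count_cons, List.count_append] at this ⊢
            omega
          · rw [← hlen, huv]
            simp
        exact (ReflTransGen.single s1).trans
          ((ReflTransGen.single s2).trans ((ReflTransGen.single s3).trans hrec))
      | b =>
        have hbmem : Γ2.a ∈ w' := by
          have : 0 < w'.count Γ2.a := by
            simp [List.count_cons] at hcnt
            omega
          exact List.count_pos_iff.mp this
        obtain ⟨u, v, huv, hu⟩ := exists_first_split w' Γ2.a hbmem
        have hua : ∀ x ∈ u, x = Γ2.b := by
          intro x hx; cases x
          · exact absurd rfl (hu _ hx)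
          · rfl
        have s1 : M1.Step (.conf [] p0 (Γ2.b :: w')) (.conf [] p1b w') := by
          have := NrNFAwtl.Step.read (M := M1) [] p0 p1b [] w' Γ2.b
            (by simp) (by simp [M1]) (by simp [M1])
          simpa using this
        have s2 : M1.Step (.conf [] p1b w') (.conf u p2 v) := by
          rw [huv]
          have := NrNFAwtl.Step.read (M := M1) [] p1b p2 u v Γ2.a
            (by intro x hx; simp [M1, hua x hx]) (by simp [M1]) (by simp [M1])
          simpa using this
        have s3 : M1.Step (.conf u p2 v) (.conf [] p0 (u ++ v)) := by
          exact NrNFAwtl.Step.restart u v p2 p0 {p0}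
            (by intro x hx; simp [M1]) rfl rfl
        have hrec : ReflTransGen M1.Step (.conf [] p0 (u ++ v)) .accept := by
          apply ih (u ++ v).length _ (u ++ v) rfl
          · have hcu : u.count Γ2.b = u.length ∧ u.count Γ2.a = 0 := by
              constructor
              · exact List.count_eq_length.mpr (fun x hx => (hua x hx).symm)
              · exact List.count_eq_zero.mpr (fun hmem => (hu _ hmem) rfl)
            have := hcnt
            rw [huv] at this
            simp [List.count_cons, List.count_append] at this ⊢
            omega
          · rw [← hlen, huv]
            simp
        exact (ReflTransGen.single s1).trans
          ((ReflTransGen.single s2).trans ((ReflTransGen.single s3).trans hrec))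

lemma M1_lang : M1.lang = { w : List Γ2 | w.count Γ2.a = w.count Γ2.b } := by
  ext w
  constructor
  · rintro ⟨q₀, hq₀, hrtg⟩
    have hq : q₀ = p0 := hq₀
    subst hq
    have hinv : Inv1 (bal w) (.conf [] p0 w) := by
      exact ⟨by simp [off1], fun _ => rfl⟩
    have := M1_rtg_inv hrtg hinv
    have hb : bal w = 0 := this
    rw [bal_counts] at hb
    simpa using (by omega : (w.count Γ2.a : ℤ) = w.count Γ2.b)
  · intro h
    exact ⟨p0, rfl, M1_complete w.length w rfl h⟩

theorem part1 : AcceptedByNrDFAwtl { w : List Γ2 | w.count Γ2.a = w.count Γ2.b } :=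
  ⟨M1St, inferInstance, M1, M1_det, M1_lang⟩

end M1sec

open Relation

lemma exists_first_split' {α : Type} (l : List α) (c : α) (h : c ∈ l) :
    ∃ u v, l = u ++ c :: v ∧ ∀ x ∈ u, x ≠ c := by
  induction l with
  | nil => cases h
  | cons d t ih =>
    by_cases hd : d = c
    · exact ⟨[], t, by simp [hd], by simp⟩
    · obtain ⟨u, v, h1, h2⟩ := ih (by
        rcases List.mem_cons.mp h with h' | h'
        · exact absurd h'.symm hd
        · exact h')
      refine ⟨d :: u, v, by rw [h1]; rfl, ?_⟩
      intro x hx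
      rcases List.mem_cons.mp hx with rfl | hx
      · exact hd
      · exact h2 x hx

/-! ### The machine M2 accepting L₂ -/

inductive M2St : Type
  | p0 | s1 | s2 | t1 | t1b | t2 | p2
deriving DecidableEq

instance : Fintype M2St :=
  ⟨{M2St.p0, M2St.s1, M2St.s2, M2St.t1, M2St.t1b, M2St.t2, M2St.p2}, fun x => by cases x <;> simp⟩

namespace M2sec

open M2St

def M2 : NrNFAwtl M2St Γ2 where
  τ q := match q with
    | p0 => ∅
    | s1 => {Γ2.a}
    | s2 => {Γ2.a}
    | t1 => ∅
    | t1b => {Γ2.a}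
    | t2 => {Γ2.b}
    | p2 => Set.univ
  I := {p0}
  δ q c := match q, c with
    | p0, Γ2.a => {s1}
    | p0, Γ2.b => {t1}
    | s1, Γ2.b => {s2}
    | s2, Γ2.b => {p2}
    | t1, Γ2.a => {t1b}
    | t1, Γ2.b => {t2}
    | t1b, Γ2.b => {p2}
    | t2, Γ2.a => {p2}
    | _, _ => ∅
  δend q := match q with
    | p0 => .accept
    | p2 => .cont {p0}
    | _ => .cont ∅
  tr_compat := by
    intro q c h
    cases q <;> cases c <;> simp_all

lemma M2_det : M2.IsDet := by
  refine ⟨⟨p0, rfl⟩, ?_, ?_⟩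
  · intro q c
    cases q <;> cases c <;>
      first
        | exact Set.subsingleton_empty
        | exact Set.subsingleton_singleton
  · intro q S h
    cases q <;> simp [M2] at h <;> rw [← h] <;>
      first
        | exact Set.subsingleton_empty
        | exact Set.subsingleton_singleton

/-- contribution to |w|_b − 2|w|_a -/
def balc2 : Γ2 → ℤ
  | Γ2.a => -2
  | Γ2.b => 1

def bal2 (w : List Γ2) : ℤ := (w.map balc2).sum

lemma bal2_step (x u v : List Γ2) (ch : Γ2) :
    bal2 (x ++ (u ++ ch :: v)) = bal2 (x ++ u ++ v) + balc2 ch := by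
  simp [bal2, List.sum_append]
  ring

lemma bal2_counts (w : List Γ2) :
    bal2 w = (w.count Γ2.b : ℤ) - 2 * (w.count Γ2.a : ℤ) := by
  induction w with
  | nil => simp [bal2]
  | cons c t ih =>
    cases c <;>
      simp [bal2, balc2, List.count_cons] at ih ⊢ <;> omega

def off2 : M2St → ℤ
  | p0 => 0
  | s1 => -2
  | s2 => -1
  | t1 => 1
  | t1b => -1
  | t2 => 2
  | p2 => 0

def Inv2 (D : ℤ) : NrConf M2St Γ2 → Prop
  | .conf x q w => bal2 (x ++ w) + off2 q = D ∧ (q = p0 → x = [])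
  | .accept => D = 0

lemma inv2_read_aux {D : ℤ} {x u v : List Γ2} {ch : Γ2} {q q' : M2St}
    (hb : bal2 (x ++ (u ++ ch :: v)) + off2 q = D)
    (hoff : off2 q' = off2 q + balc2 ch) :
    bal2 (x ++ u ++ v) + off2 q' = D := by
  rw [bal2_step] at hb
  linarith

lemma M2_step_inv {D : ℤ} {c c' : NrConf M2St Γ2} (h : M2.Step c c')
    (hI : Inv2 D c) : Inv2 D c' := by
  cases h with
  | read x q q' u v ch htr hnt hδ =>
    obtain ⟨hb, hx⟩ := hI
    have hne : (q = p0 ∨ q = t1) → u = [] := by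
      rintro (rfl | rfl) <;>
      · cases u with
        | nil => rfl
        | cons d t => exact absurd (htr d (by simp)) (by simp [M2])
    cases q with
    | p0 =>
      cases ch with
      | a =>
        have hq' : q' = s1 := by simpa [M2] using hδ
        subst hq'
        exact ⟨inv2_read_aux hb (by norm_num [off2, balc2]), by simp⟩
      | b =>
        have hq' : q' = t1 := by simpa [M2] using hδ
        subst hq'
        exact ⟨inv2_read_aux hb (by norm_num [off2, balc2]), by simp⟩
    | s1 =>
      cases ch with
      | a => exact absurd hδ (by simp [M2])
      | b =>
        have hq' : q' = s2 := by simpa [M2] using hδ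
        subst hq'
        exact ⟨inv2_read_aux hb (by norm_num [off2, balc2]), by simp⟩
    | s2 =>
      cases ch with
      | a => exact absurd hδ (by simp [M2])
      | b =>
        have hq' : q' = p2 := by simpa [M2] using hδ
        subst hq'
        exact ⟨inv2_read_aux hb (by norm_num [off2, balc2]), by simp⟩
    | t1 =>
      cases ch with
      | a =>
        have hq' : q' = t1b := by simpa [M2] using hδ
        subst hq'
        exact ⟨inv2_read_aux hb (by norm_num [off2, balc2]), by simp⟩
      | b =>
        have hq' : q' = t2 := by simpa [M2] using hδ
        subst hq'
        exact ⟨inv2_read_aux hb (by norm_num [off2, balc2]), by simp⟩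
    | t1b =>
      cases ch with
      | a => exact absurd hδ (by simp [M2])
      | b =>
        have hq' : q' = p2 := by simpa [M2] using hδ
        subst hq'
        exact ⟨inv2_read_aux hb (by norm_num [off2, balc2]), by simp⟩
    | t2 =>
      cases ch with
      | b => exact absurd hδ (by simp [M2])
      | a =>
        have hq' : q' = p2 := by simpa [M2] using hδ
        subst hq'
        exact ⟨inv2_read_aux hb (by norm_num [off2, balc2]), by simp⟩
    | p2 =>
      cases ch <;> exact absurd hδ (by simp [M2])
  | restart x w q q' S htr hend hmem =>
    obtain ⟨hb, hx⟩ := hI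
    cases q with
    | p0 => exact absurd hend (by simp [M2])
    | p2 =>
      have hS : S = {p0} :=
        (EndMove.cont.inj (show EndMove.cont ({p0} : Set M2St) = .cont S from hend)).symm
      subst hS
      have hq' : q' = p0 := hmem
      subst hq'
      refine ⟨?_, fun _ => rfl⟩
      simpa [off2] using hb
    | s1 =>
      have hS : S = ∅ :=
        (EndMove.cont.inj (show EndMove.cont (∅ : Set M2St) = .cont S from hend)).symm
      subst hS; exact absurd hmem (by simp)
    | s2 =>
      have hS : S = ∅ :=
        (EndMove.cont.inj (show EndMove.cont (∅ : Set M2St) = .cont S from hend)).symm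
      subst hS; exact absurd hmem (by simp)
    | t1 =>
      have hS : S = ∅ :=
        (EndMove.cont.inj (show EndMove.cont (∅ : Set M2St) = .cont S from hend)).symm
      subst hS; exact absurd hmem (by simp)
    | t1b =>
      have hS : S = ∅ :=
        (EndMove.cont.inj (show EndMove.cont (∅ : Set M2St) = .cont S from hend)).symm
      subst hS; exact absurd hmem (by simp)
    | t2 =>
      have hS : S = ∅ :=
        (EndMove.cont.inj (show EndMove.cont (∅ : Set M2St) = .cont S from hend)).symm
      subst hS; exact absurd hmem (by simp)
  | accept x w q htr hend =>
    obtain ⟨hb, hx⟩ := hI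
    cases q with
    | p0 =>
      have hw : w = [] := by
        cases w with
        | nil => rfl
        | cons d t => exact absurd (htr d (by simp)) (by simp [M2])
      have hx' : x = [] := hx rfl
      subst hw; subst hx'
      exact (by simpa [bal2, off2] using hb : (0:ℤ) = D).symm
    | s1 => exact absurd hend (by simp [M2])
    | s2 => exact absurd hend (by simp [M2])
    | t1 => exact absurd hend (by simp [M2])
    | t1b => exact absurd hend (by simp [M2])
    | t2 => exact absurd hend (by simp [M2])
    | p2 => exact absurd hend (by simp [M2])

lemma M2_rtg_inv {D : ℤ} {c c' : NrConf M2St Γ2}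
    (h : ReflTransGen M2.Step c c') (hI : Inv2 D c) : Inv2 D c' := by
  induction h with
  | refl => exact hI
  | tail _ hstep ih => exact M2_step_inv hstep ih

lemma M2_complete : ∀ n (w : List Γ2), w.length = n →
    w.count Γ2.b = 2 * w.count Γ2.a →
    ReflTransGen M2.Step (.conf [] p0 w) .accept := by
  intro n
  induction n using Nat.strong_induction_on with
  | _ n ih =>
    intro w hlen hcnt
    cases w with
    | nil =>
      exact ReflTransGen.single
        (NrNFAwtl.Step.accept [] [] p0 (by simp) rfl)
    | cons c w' =>
      cases c with
      | a =>
        -- w = a :: w', need two b's in w'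
        have hbmem : Γ2.b ∈ w' := by
          have : 0 < w'.count Γ2.b := by
            simp [List.count_cons] at hcnt; omega
          exact List.count_pos_iff.mp this
        obtain ⟨u, v, huv, hu⟩ := exists_first_split' w' Γ2.b hbmem
        have hua : ∀ x ∈ u, x = Γ2.a := by
          intro x hx; cases x
          · rfl
          · exact absurd rfl (hu _ hx)
        have hcu : u.count Γ2.a = u.length ∧ u.count Γ2.b = 0 :=
          ⟨List.count_eq_length.mpr (fun x hx => (hua x hx).symm),
           List.count_eq_zero.mpr (fun hmem => (hu _ hmem) rfl)⟩
        have hbv : Γ2.b ∈ v := by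
          have h1 := hcnt
          rw [huv] at h1
          simp [List.count_cons, List.count_append, hcu.1, hcu.2] at h1
          have : 0 < v.count Γ2.b := by omega
          exact List.count_pos_iff.mp this
        obtain ⟨u2, v2, huv2, hu2⟩ := exists_first_split' v Γ2.b hbv
        have hua2 : ∀ x ∈ u2, x = Γ2.a := by
          intro x hx; cases x
          · rfl
          · exact absurd rfl (hu2 _ hx)
        have hcu2 : u2.count Γ2.a = u2.length ∧ u2.count Γ2.b = 0 :=
          ⟨List.count_eq_length.mpr (fun x hx => (hua2 x hx).symm),
           List.count_eq_zero.mpr (fun hmem => (hu2 _ hmem) rfl)⟩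
        have s1' : M2.Step (.conf [] p0 (Γ2.a :: w')) (.conf [] s1 w') := by
          have := NrNFAwtl.Step.read (M := M2) [] p0 s1 [] w' Γ2.a
            (by simp) (by simp [M2]) (by simp [M2])
          simpa using this
        have s2' : M2.Step (.conf [] s1 w') (.conf u s2 v) := by
          rw [huv]
          have := NrNFAwtl.Step.read (M := M2) [] s1 s2 u v Γ2.b
            (by intro x hx; simp [M2, hua x hx]) (by simp [M2]) (by simp [M2])
          simpa using this
        have s3' : M2.Step (.conf u s2 v) (.conf (u ++ u2) p2 v2) := by
          rw [huv2]
          exact NrNFAwtl.Step.read (M := M2) u s2 p2 u2 v2 Γ2.b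
            (by intro x hx; simp [M2, hua2 x hx]) (by simp [M2]) (by simp [M2])
        have s4' : M2.Step (.conf (u ++ u2) p2 v2)
            (.conf [] p0 ((u ++ u2) ++ v2)) :=
          NrNFAwtl.Step.restart (u ++ u2) v2 p2 p0 {p0}
            (by intro x hx; simp [M2]) rfl rfl
        have hrec : ReflTransGen M2.Step (.conf [] p0 ((u ++ u2) ++ v2)) .accept := by
          apply ih ((u ++ u2) ++ v2).length _ _ rfl
          · have h1 := hcnt
            rw [huv, huv2] at h1
            simp [List.count_cons, List.count_append, hcu.1, hcu.2, hcu2.1, hcu2.2] at h1 ⊢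
            omega
          · rw [← hlen, huv, huv2]
            simp
            omega
        exact (ReflTransGen.single s1').trans ((ReflTransGen.single s2').trans
          ((ReflTransGen.single s3').trans ((ReflTransGen.single s4').trans hrec)))
      | b =>
        -- w = b :: w'
        have hane : w' ≠ [] := by
          rintro rfl
          simp [List.count_cons] at hcnt
        cases w' with
        | nil => exact absurd rfl hane
        | cons c2 w'' =>
          have s1' : M2.Step (.conf [] p0 (Γ2.b :: c2 :: w'')) (.conf [] t1 (c2 :: w'')) := by
            have := NrNFAwtl.Step.read (M := M2) [] p0 t1 [] (c2 :: w'') Γ2.b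
              (by simp) (by simp [M2]) (by simp [M2])
            simpa using this
          cases c2 with
          | a =>
            -- read the a, then find one more b
            have s2' : M2.Step (.conf [] t1 (Γ2.a :: w'')) (.conf [] t1b w'') := by
              have := NrNFAwtl.Step.read (M := M2) [] t1 t1b [] w'' Γ2.a
                (by simp) (by simp [M2]) (by simp [M2])
              simpa using this
            have hbmem : Γ2.b ∈ w'' := by
              have : 0 < w''.count Γ2.b := by
                simp [List.count_cons] at hcnt; omega
              exact List.count_pos_iff.mp this
            obtain ⟨u, v, huv, hu⟩ := exists_first_split' w'' Γ2.b hbmem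
            have hua : ∀ x ∈ u, x = Γ2.a := by
              intro x hx; cases x
              · rfl
              · exact absurd rfl (hu _ hx)
            have hcu : u.count Γ2.a = u.length ∧ u.count Γ2.b = 0 :=
              ⟨List.count_eq_length.mpr (fun x hx => (hua x hx).symm),
               List.count_eq_zero.mpr (fun hmem => (hu _ hmem) rfl)⟩
            have s3' : M2.Step (.conf [] t1b w'') (.conf u p2 v) := by
              rw [huv]
              have := NrNFAwtl.Step.read (M := M2) [] t1b p2 u v Γ2.b
                (by intro x hx; simp [M2, hua x hx]) (by simp [M2]) (by simp [M2])
              simpa using this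
            have s4' : M2.Step (.conf u p2 v) (.conf [] p0 (u ++ v)) :=
              NrNFAwtl.Step.restart u v p2 p0 {p0}
                (by intro x hx; simp [M2]) rfl rfl
            have hrec : ReflTransGen M2.Step (.conf [] p0 (u ++ v)) .accept := by
              apply ih (u ++ v).length _ _ rfl
              · have h1 := hcnt
                rw [huv] at h1
                simp [List.count_cons, List.count_append, hcu.1, hcu.2] at h1 ⊢
                omega
              · rw [← hlen, huv]
                simp
                omega
            exact (ReflTransGen.single s1').trans ((ReflTransGen.single s2').trans
              ((ReflTransGen.single s3').trans ((ReflTransGen.single s4').trans hrec)))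
          | b =>
            -- read the second b, then find an a
            have s2' : M2.Step (.conf [] t1 (Γ2.b :: w'')) (.conf [] t2 w'') := by
              have := NrNFAwtl.Step.read (M := M2) [] t1 t2 [] w'' Γ2.b
                (by simp) (by simp [M2]) (by simp [M2])
              simpa using this
            have hamem : Γ2.a ∈ w'' := by
              have : 0 < w''.count Γ2.a := by
                simp [List.count_cons] at hcnt; omega
              exact List.count_pos_iff.mp this
            obtain ⟨u, v, huv, hu⟩ := exists_first_split' w'' Γ2.a hamem
            have hua : ∀ x ∈ u, x = Γ2.b := by
              intro x hx; cases x
              · exact absurd rfl (hu _ hx)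
              · rfl
            have hcu : u.count Γ2.b = u.length ∧ u.count Γ2.a = 0 :=
              ⟨List.count_eq_length.mpr (fun x hx => (hua x hx).symm),
               List.count_eq_zero.mpr (fun hmem => (hu _ hmem) rfl)⟩
            have s3' : M2.Step (.conf [] t2 w'') (.conf u p2 v) := by
              rw [huv]
              have := NrNFAwtl.Step.read (M := M2) [] t2 p2 u v Γ2.a
                (by intro x hx; simp [M2, hua x hx]) (by simp [M2]) (by simp [M2])
              simpa using this
            have s4' : M2.Step (.conf u p2 v) (.conf [] p0 (u ++ v)) :=
              NrNFAwtl.Step.restart u v p2 p0 {p0}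
                (by intro x hx; simp [M2]) rfl rfl
            have hrec : ReflTransGen M2.Step (.conf [] p0 (u ++ v)) .accept := by
              apply ih (u ++ v).length _ _ rfl
              · have h1 := hcnt
                rw [huv] at h1
                simp [List.count_cons, List.count_append, hcu.1, hcu.2] at h1 ⊢
                omega
              · rw [← hlen, huv]
                simp
                omega
            exact (ReflTransGen.single s1').trans ((ReflTransGen.single s2').trans
              ((ReflTransGen.single s3').trans ((ReflTransGen.single s4').trans hrec)))

lemma M2_lang : M2.lang = { w : List Γ2 | w.count Γ2.b = 2 * w.count Γ2.a } := by
  ext w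
  constructor
  · rintro ⟨q₀, hq₀, hrtg⟩
    have hq : q₀ = p0 := hq₀
    subst hq
    have hinv : Inv2 (bal2 w) (.conf [] p0 w) := ⟨by simp [off2], fun _ => rfl⟩
    have hb : bal2 w = 0 := M2_rtg_inv hrtg hinv
    rw [bal2_counts] at hb
    show w.count Γ2.b = 2 * w.count Γ2.a
    have h2 : (w.count Γ2.b : ℤ) = 2 * w.count Γ2.a := by omega
    exact_mod_cast h2
  · intro h
    exact ⟨p0, rfl, M2_complete w.length w rfl h⟩

theorem part2 : AcceptedByNrDFAwtl { w : List Γ2 | w.count Γ2.b = 2 * w.count Γ2.a } :=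
  ⟨M2St, inferInstance, M2, M2_det, M2_lang⟩

end M2sec

open Relation

namespace Imp

open scoped Classical

/-! ### Abstract configurations for runs on words `a^i b^j` -/

inductive AC (Q : Type) : Type
  | st (q : Q) (p r s : ℕ)
  | acc
  | dd

noncomputable def pick {Q : Type} (S : Set Q) : Option Q :=
  if h : S.Nonempty then some h.some else none

lemma pick_mem {Q : Type} {S : Set Q} {q : Q} (h : pick S = some q) : q ∈ S := by
  by_cases hS : S.Nonempty
  · simp only [pick, dif_pos hS] at h
    rw [← Option.some_inj.mp h]
    exact hS.some_mem
  · simp [pick, hS] at h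

lemma pick_eq_some {Q : Type} {S : Set Q} (hsub : S.Subsingleton) {q : Q}
    (hq : q ∈ S) : pick S = some q := by
  have hS : S.Nonempty := ⟨q, hq⟩
  simp only [pick, dif_pos hS, Option.some_inj]
  exact hsub hS.some_mem hq

lemma pick_eq_none {Q : Type} {S : Set Q} (h : pick S = none) : ¬ S.Nonempty := by
  intro hS
  simp [pick, hS] at h

variable {Q : Type} (M : NrNFAwtl Q Γ2)

noncomputable def afun : AC Q → AC Q
  | .st q p r s =>
    if 0 < r ∧ Γ2.a ∉ M.τ q then
      ((pick (M.δ q Γ2.a)).map (fun q' => AC.st q' p (r-1) s)).getD .dd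
    else if 0 < s ∧ Γ2.b ∉ M.τ q then
      ((pick (M.δ q Γ2.b)).map (fun q' => AC.st q' (p+r) 0 (s-1))).getD .dd
    else
      match M.δend q with
      | .accept => .acc
      | .cont S => ((pick S).map (fun q' => AC.st q' 0 (p+r) s)).getD .dd
  | .acc => .acc
  | .dd => .dd

@[simp] lemma afun_acc : afun M .acc = .acc := rfl
@[simp] lemma afun_dd : afun M .dd = .dd := rfl

def gammaSt (q : Q) (p r s : ℕ) : NrConf Q Γ2 :=
  .conf (List.replicate p Γ2.a) q (List.replicate r Γ2.a ++ List.replicate s Γ2.b)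

lemma repl_decomp_b : ∀ (u : List Γ2) (s : ℕ) (v : List Γ2) (c : Γ2),
    u ++ c :: v = List.replicate s Γ2.b →
    c = Γ2.b ∧ ∃ k, k < s ∧ u = List.replicate k Γ2.b ∧
      v = List.replicate (s-1-k) Γ2.b := by
  intro u
  induction u with
  | nil =>
    intro s v c h
    cases s with
    | zero => simp at h
    | succ s' =>
      rw [List.replicate_succ] at h
      simp at h
      exact ⟨h.1, 0, Nat.succ_pos _, rfl, by simp [h.2]⟩
  | cons d u' ih =>
    intro s v c h
    cases s with
    | zero => simp at h
    | succ s' =>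
      rw [List.replicate_succ] at h
      simp at h
      obtain ⟨hd, h'⟩ := h
      obtain ⟨hc, k, hk, hu, hv⟩ := ih s' v c h'
      refine ⟨hc, k+1, by omega, ?_, ?_⟩
      · rw [List.replicate_succ, hd, hu]
      · rw [hv]; congr 1; omega

/-- decompositions of `a^r b^s` as `u ++ c :: v` -/
lemma repl_decomp {s : ℕ} : ∀ (r : ℕ) (u v : List Γ2) (c : Γ2),
    u ++ c :: v = List.replicate r Γ2.a ++ List.replicate s Γ2.b →
    (c = Γ2.a ∧ ∃ k, k < r ∧ u = List.replicate k Γ2.a ∧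
      v = List.replicate (r-1-k) Γ2.a ++ List.replicate s Γ2.b)
    ∨ (c = Γ2.b ∧ ∃ k, k < s ∧
      u = List.replicate r Γ2.a ++ List.replicate k Γ2.b ∧
      v = List.replicate (s-1-k) Γ2.b) := by
  intro r
  induction r with
  | zero =>
    intro u v c h
    simp at h
    exact Or.inr (repl_decomp_b u s v c h)
  | succ r' ih =>
    intro u v c h
    rw [List.replicate_succ] at h
    cases u with
    | nil =>
      simp at h
      refine Or.inl ⟨h.1, 0, Nat.succ_pos _, rfl, ?_⟩
      simp [h.2]
    | cons d u' =>
      simp at h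
      obtain ⟨hd, h'⟩ := h
      rcases ih u' v c h' with ⟨hc, k, hk, hu, hv⟩ | ⟨hc, k, hk, hu, hv⟩
      · refine Or.inl ⟨hc, k+1, by omega, ?_, ?_⟩
        · rw [List.replicate_succ, hd, hu]
        · rw [hv]; congr 2; omega
      · refine Or.inr ⟨hc, k, hk, ?_, hv⟩
        rw [List.replicate_succ, hd, hu]
        simp


lemma mem_repl_ab {x : Γ2} {r s : ℕ}
    (h : x ∈ List.replicate r Γ2.a ++ List.replicate s Γ2.b) :
    (x = Γ2.a ∧ 0 < r) ∨ (x = Γ2.b ∧ 0 < s) := by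
  rcases List.mem_append.mp h with h' | h'
  · left
    refine ⟨List.eq_of_mem_replicate h', ?_⟩
    rcases Nat.eq_zero_or_pos r with rfl | hr
    · simp at h'
    · exact hr
  · right
    refine ⟨List.eq_of_mem_replicate h', ?_⟩
    rcases Nat.eq_zero_or_pos s with rfl | hs
    · simp at h'
    · exact hs

lemma ahead_translucent {q : Q} {r s : ℕ}
    (h1 : ¬(0 < r ∧ Γ2.a ∉ M.τ q)) (h2 : ¬(0 < s ∧ Γ2.b ∉ M.τ q)) :
    ∀ x ∈ List.replicate r Γ2.a ++ List.replicate s Γ2.b, x ∈ M.τ q := by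
  intro x hx
  rcases mem_repl_ab hx with ⟨rfl, hr⟩ | ⟨rfl, hs⟩
  · by_contra hmem
    exact h1 ⟨hr, hmem⟩
  · by_contra hmem
    exact h2 ⟨hs, hmem⟩

lemma bridge_acc {q : Q} {p r s : ℕ}
    (h : afun M (.st q p r s) = .acc) :
    M.Step (gammaSt q p r s) .accept := by
  by_cases h1 : 0 < r ∧ Γ2.a ∉ M.τ q
  · rcases hp : pick (M.δ q Γ2.a) with _ | q' <;>
      simp [afun, h1, hp] at h
  · by_cases h2 : 0 < s ∧ Γ2.b ∉ M.τ q
    · rcases hp : pick (M.δ q Γ2.b) with _ | q' <;>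
        simp [afun, h1, h2, hp] at h
    · rcases hend : M.δend q with S | _
      · rcases hp : pick S with _ | q' <;>
          simp [afun, h1, h2, hend, hp] at h
      · exact NrNFAwtl.Step.accept _ _ q (ahead_translucent M h1 h2) hend

lemma bridge_st {q : Q} {p r s : ℕ} {q' : Q} {p' r' s' : ℕ}
    (h : afun M (.st q p r s) = .st q' p' r' s') :
    M.Step (gammaSt q p r s) (gammaSt q' p' r' s') := by
  by_cases h1 : 0 < r ∧ Γ2.a ∉ M.τ q
  · rcases hp : pick (M.δ q Γ2.a) with _ | q'' <;>
      simp [afun, h1, hp] at h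
    obtain ⟨rfl, rfl, rfl, rfl⟩ := h
    have hr : r = (r - 1) + 1 := by omega
    have hstep := NrNFAwtl.Step.read (M := M) (List.replicate p Γ2.a) q q'' []
      (List.replicate (r-1) Γ2.a ++ List.replicate s Γ2.b) Γ2.a
      (by simp) h1.2 (pick_mem hp)
    unfold gammaSt
    rw [hr, List.replicate_succ]
    simpa using hstep
  · by_cases h2 : 0 < s ∧ Γ2.b ∉ M.τ q
    · rcases hp : pick (M.δ q Γ2.b) with _ | q'' <;>
        simp [afun, h1, h2, hp] at h
      obtain ⟨rfl, rfl, rfl, rfl⟩ := h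
      have hs : s = (s - 1) + 1 := by omega
      have htr : ∀ x ∈ List.replicate r Γ2.a, x ∈ M.τ q := by
        intro x hx
        have hxa := List.eq_of_mem_replicate hx
        subst hxa
        rcases Nat.eq_zero_or_pos r with rfl | hr
        · simp at hx
        · by_contra hmem
          exact h1 ⟨hr, hmem⟩
      have hstep := NrNFAwtl.Step.read (M := M) (List.replicate p Γ2.a) q q''
        (List.replicate r Γ2.a) (List.replicate (s-1) Γ2.b) Γ2.b
        htr h2.2 (pick_mem hp)
      unfold gammaSt
      rw [hs, List.replicate_succ]
      have e1 : List.replicate p Γ2.a ++ List.replicate r Γ2.a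
          = List.replicate (p+r) Γ2.a := (List.replicate_add p r Γ2.a).symm
      rw [← e1]
      simpa using hstep
    · rcases hend : M.δend q with S | _
      · rcases hp : pick S with _ | q'' <;>
          simp [afun, h1, h2, hend, hp] at h
        obtain ⟨rfl, rfl, rfl, rfl⟩ := h
        have hstep := NrNFAwtl.Step.restart (M := M) (List.replicate p Γ2.a)
          (List.replicate r Γ2.a ++ List.replicate s Γ2.b) q q'' S
          (ahead_translucent M h1 h2) hend (pick_mem hp)
        unfold gammaSt
        have e1 : List.replicate (p+r) Γ2.a ++ List.replicate s Γ2.b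
            = List.replicate p Γ2.a ++ (List.replicate r Γ2.a ++ List.replicate s Γ2.b) := by
          rw [List.replicate_add, List.append_assoc]
        rw [e1]
        exact hstep
      · simp [afun, h1, h2, hend] at h

lemma bridge_inv (hdet : M.IsDet) {q : Q} {p r s : ℕ} {d : NrConf Q Γ2}
    (hstep : M.Step (gammaSt q p r s) d) :
    (afun M (.st q p r s) = .acc ∧ d = .accept) ∨
    (∃ q' p' r' s', afun M (.st q p r s) = .st q' p' r' s' ∧ d = gammaSt q' p' r' s') := by
  obtain ⟨-, hdet2, hdet3⟩ := hdet
  generalize hE : gammaSt q p r s = E at hstep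
  cases hstep with
  | read x q₁ q' u v c htr hnt hδ =>
    unfold gammaSt at hE
    injection hE with h1 h2 h3
    subst h1; subst h2
    rcases repl_decomp r u v c h3.symm with ⟨rfl, k, hk, hu, hv⟩ | ⟨rfl, k, hk, hu, hv⟩
    · -- read an a
      have hk0 : k = 0 := by
        by_contra hk0
        have : Γ2.a ∈ u := by
          rw [hu]
          exact List.mem_replicate.mpr ⟨hk0, rfl⟩
        exact hnt (htr _ this)
      subst hk0
      simp only [List.replicate_zero] at hu
      subst hu
      have h1 : 0 < r ∧ Γ2.a ∉ M.τ q := ⟨by omega, hnt⟩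
      have hp : pick (M.δ q Γ2.a) = some q' := pick_eq_some (hdet2 q Γ2.a) hδ
      refine Or.inr ⟨q', p, r-1, s, ?_, ?_⟩
      · simp [afun, h1, hp]
      · rw [hv]
        simp [gammaSt]
    · -- read a b
      have hk0 : k = 0 := by
        by_contra hk0
        have : Γ2.b ∈ u := by
          rw [hu]
          exact List.mem_append.mpr (Or.inr (List.mem_replicate.mpr ⟨hk0, rfl⟩))
        exact hnt (htr _ this)
      subst hk0
      simp only [List.replicate_zero, List.append_nil] at hu
      subst hu
      have h1 : ¬(0 < r ∧ Γ2.a ∉ M.τ q) := by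
        rintro ⟨hr, hmem⟩
        exact hmem (htr Γ2.a (List.mem_replicate.mpr ⟨by omega, rfl⟩))
      have h2 : 0 < s ∧ Γ2.b ∉ M.τ q := ⟨by omega, hnt⟩
      have hp : pick (M.δ q Γ2.b) = some q' := pick_eq_some (hdet2 q Γ2.b) hδ
      refine Or.inr ⟨q', p + r, 0, s-1, ?_, ?_⟩
      · simp [afun, h1, h2, hp]
      · rw [hv]
        simp only [gammaSt, List.replicate_add, List.replicate_zero,
          List.nil_append, List.append_nil, Nat.sub_zero]
  | restart x w q₁ q' S htr hend hmem =>
    unfold gammaSt at hE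
    injection hE with h1 h2 h3
    subst h1; subst h2; subst h3
    have h1 : ¬(0 < r ∧ Γ2.a ∉ M.τ q) := by
      rintro ⟨hr, hmem'⟩
      exact hmem' (htr Γ2.a (List.mem_append.mpr (Or.inl (List.mem_replicate.mpr ⟨by omega, rfl⟩))))
    have h2 : ¬(0 < s ∧ Γ2.b ∉ M.τ q) := by
      rintro ⟨hs, hmem'⟩
      exact hmem' (htr Γ2.b (List.mem_append.mpr (Or.inr (List.mem_replicate.mpr ⟨by omega, rfl⟩))))
    have hp : pick S = some q' := pick_eq_some (hdet3 q S hend) hmem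
    refine Or.inr ⟨q', 0, p + r, s, ?_, ?_⟩
    · simp [afun, h1, h2, hend, hp]
    · simp only [gammaSt, List.replicate_add, List.replicate_zero,
        List.nil_append, List.append_assoc]
  | accept x w q₁ htr hend =>
    unfold gammaSt at hE
    injection hE with h1 h2 h3
    subst h1; subst h2; subst h3
    have h1 : ¬(0 < r ∧ Γ2.a ∉ M.τ q) := by
      rintro ⟨hr, hmem'⟩
      exact hmem' (htr Γ2.a (List.mem_append.mpr (Or.inl (List.mem_replicate.mpr ⟨by omega, rfl⟩))))
    have h2 : ¬(0 < s ∧ Γ2.b ∉ M.τ q) := by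
      rintro ⟨hs, hmem'⟩
      exact hmem' (htr Γ2.b (List.mem_append.mpr (Or.inr (List.mem_replicate.mpr ⟨by omega, rfl⟩))))
    exact Or.inl ⟨by simp [afun, h1, h2, hend], rfl⟩

@[simp] lemma iter_acc (n : ℕ) : (afun M)^[n] .acc = .acc := by
  induction n with
  | zero => rfl
  | succ n ih => rw [Function.iterate_succ_apply, afun_acc, ih]

@[simp] lemma iter_dd (n : ℕ) : (afun M)^[n] .dd = .dd := by
  induction n with
  | zero => rfl
  | succ n ih => rw [Function.iterate_succ_apply, afun_dd, ih]

lemma acc_iff_rtg (hdet : M.IsDet) (q : Q) (p r s : ℕ) :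
    (∃ n, (afun M)^[n] (.st q p r s) = .acc) ↔
      ReflTransGen M.Step (gammaSt q p r s) .accept := by
  constructor
  · rintro ⟨n, hn⟩
    induction n generalizing q p r s with
    | zero => simp at hn
    | succ n ih =>
      rw [Function.iterate_succ_apply] at hn
      cases hA : afun M (.st q p r s) with
      | st q' p' r' s' =>
        rw [hA] at hn
        exact ReflTransGen.head (bridge_st M hA) (ih q' p' r' s' hn)
      | acc => exact ReflTransGen.single (bridge_acc M hA)
      | dd =>
        rw [hA, iter_dd] at hn
        cases hn
  · intro h
    have key : ∀ (c : NrConf Q Γ2), ReflTransGen M.Step c .accept →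
        ∀ q p r s, c = gammaSt q p r s →
        ∃ n, (afun M)^[n] (AC.st q p r s) = .acc := by
      intro c hc
      induction hc using Relation.ReflTransGen.head_induction_on with
      | refl =>
        intro q p r s hEq
        exact absurd hEq.symm (by simp [gammaSt])
      | head hstep _ ih =>
        intro q p r s hEq
        subst hEq
        rcases bridge_inv M hdet hstep with ⟨hA, rfl⟩ | ⟨q', p', r', s', hA, rfl⟩
        · exact ⟨1, by simpa using hA⟩
        · obtain ⟨n, hn⟩ := ih q' p' r' s' rfl
          exact ⟨n + 1, by rw [Function.iterate_succ_apply, hA]; exact hn⟩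
    exact key _ h q p r s rfl

lemma acc_from_later {X : AC Q} (t : ℕ) :
    (∃ n, (afun M)^[n] X = .acc) ↔ (∃ n, (afun M)^[n] ((afun M)^[t] X) = .acc) := by
  constructor
  · rintro ⟨n, hn⟩
    by_cases hnt : t ≤ n
    · refine ⟨n - t, ?_⟩
      rw [← Function.iterate_add_apply, Nat.sub_add_cancel hnt]
      exact hn
    · refine ⟨0, ?_⟩
      simp only [Function.iterate_zero, id]
      have : (afun M)^[t] X = (afun M)^[t - n] ((afun M)^[n] X) := by
        rw [← Function.iterate_add_apply, Nat.sub_add_cancel (le_of_not_ge hnt)]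
      rw [this, hn, iter_acc]
  · rintro ⟨n, hn⟩
    exact ⟨n + t, by rw [Function.iterate_add_apply]; exact hn⟩


/-! ### Generic counters -/

def cnt (g : ℕ → ℕ) : ℕ → ℕ
  | 0 => 0
  | t+1 => cnt g t + g t

lemma cnt_mono (g : ℕ → ℕ) {t t' : ℕ} (h : t ≤ t') : cnt g t ≤ cnt g t' := by
  induction t' with
  | zero => simp_all
  | succ t'' ih =>
    rcases Nat.lt_or_ge t (t''+1) with h' | h'
    · exact le_trans (ih (by omega)) (by simp [cnt])
    · have : t = t'' + 1 := by omega
      subst this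
      rfl

lemma cnt_le_self (g : ℕ → ℕ) (hg : ∀ t, g t ≤ 1) : ∀ t, cnt g t ≤ t := by
  intro t
  induction t with
  | zero => simp [cnt]
  | succ t ih =>
    have := hg t
    simp only [cnt]
    omega

lemma cnt_cross (g : ℕ → ℕ) (hg : ∀ t, g t ≤ 1) (n : ℕ) :
    ∀ T, n < cnt g T → ∃ t, t < T ∧ g t = 1 ∧ cnt g t = n := by
  intro T
  induction T with
  | zero => intro h; simp [cnt] at h
  | succ T ih =>
    intro h
    rcases Nat.lt_or_ge n (cnt g T) with h' | h'
    · obtain ⟨t, ht, h1, h2⟩ := ih h'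
      exact ⟨t, by omega, h1, h2⟩
    · have hgT := hg T
      simp only [cnt] at h
      refine ⟨T, by omega, by omega, by omega⟩

lemma cnt_period (g : ℕ → ℕ) (t₁ c : ℕ) (hc : ∀ t, t₁ ≤ t → g (t + c) = g t) :
    ∀ d, cnt g (t₁ + d + c) = cnt g (t₁ + d) + (cnt g (t₁ + c) - cnt g t₁) := by
  intro d
  induction d with
  | zero => simpa using (Nat.add_sub_cancel' (cnt_mono g (by omega : t₁ ≤ t₁ + c))).symm
  | succ d ih =>
    have e1 : t₁ + (d+1) + c = (t₁ + d + c) + 1 := by omega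
    have e2 : t₁ + (d+1) = (t₁ + d) + 1 := by omega
    rw [e1, e2]
    show cnt g (t₁ + d + c) + g (t₁ + d + c) = cnt g (t₁ + d) + g (t₁ + d) + _
    rw [hc (t₁ + d) (by omega), ih]
    omega

lemma cnt_cycles (g : ℕ → ℕ) (t₁ c : ℕ) (hc : ∀ t, t₁ ≤ t → g (t + c) = g t) :
    ∀ k, cnt g (t₁ + k * c) = cnt g t₁ + k * (cnt g (t₁ + c) - cnt g t₁) := by
  intro k
  induction k with
  | zero => simp
  | succ k ih =>
    have e1 : t₁ + (k+1) * c = (t₁ + k * c) + c := by ring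
    rw [e1]
    have := cnt_period g t₁ c hc (k * c)
    rw [this, ih]
    ring

/-! ### The ideal path of a deterministic machine on `a^∞ b^∞` -/

inductive IS (Q : Type) : Type
  | mid (q : Q) (φ : Bool)
  | iacc
  | idd

def ISenc : IS Q → (Q × Bool) ⊕ Bool
  | .mid q φ => Sum.inl (q, φ)
  | .iacc => Sum.inr true
  | .idd => Sum.inr false

lemma ISenc_inj : Function.Injective (ISenc (Q := Q)) := by
  intro x y h
  cases x <;> cases y <;> simp [ISenc] at h <;> try rfl
  · obtain ⟨h1, h2⟩ := h
    rw [h1, h2]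
  all_goals simp_all

instance [Finite Q] : Finite (IS Q) := Finite.of_injective _ (ISenc_inj (Q := Q))

noncomputable def istep : IS Q → IS Q
  | .mid q true =>
    if Γ2.a ∉ M.τ q then
      ((pick (M.δ q Γ2.a)).map (fun q' => IS.mid q' true)).getD .idd
    else if Γ2.b ∉ M.τ q then
      ((pick (M.δ q Γ2.b)).map (fun q' => IS.mid q' false)).getD .idd
    else
      match M.δend q with
      | .accept => .iacc
      | .cont S => ((pick S).map (fun q' => IS.mid q' true)).getD .idd
  | .mid q false =>
    if Γ2.b ∉ M.τ q then
      ((pick (M.δ q Γ2.b)).map (fun q' => IS.mid q' false)).getD .idd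
    else
      match M.δend q with
      | .accept => .iacc
      | .cont S => ((pick S).map (fun q' => IS.mid q' true)).getD .idd
  | .iacc => .iacc
  | .idd => .idd

noncomputable def consA : IS Q → ℕ
  | .mid q true => if Γ2.a ∉ M.τ q then 1 else 0
  | _ => 0

noncomputable def consB : IS Q → ℕ
  | .mid q true => if Γ2.a ∈ M.τ q ∧ Γ2.b ∉ M.τ q then 1 else 0
  | .mid q false => if Γ2.b ∉ M.τ q then 1 else 0
  | _ => 0

lemma consA_le_one (σ : IS Q) : consA M σ ≤ 1 := by
  cases σ with
  | mid q φ => cases φ <;> simp [consA] <;> split <;> simp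
  | iacc => simp [consA]
  | idd => simp [consA]

lemma consB_le_one (σ : IS Q) : consB M σ ≤ 1 := by
  cases σ with
  | mid q φ => cases φ <;> simp [consB] <;> split <;> simp
  | iacc => simp [consB]
  | idd => simp [consB]

/-- the configuration shape corresponding to an ideal state -/
def form : IS Q → ℕ → ℕ → AC Q
  | .mid q true, i, j => .st q 0 i j
  | .mid q false, i, j => .st q i 0 j
  | .iacc, _, _ => .acc
  | .idd, _, _ => .dd

lemma form_ne_acc {σ : IS Q} {i j : ℕ} (h : σ ≠ .iacc) : form σ i j ≠ .acc := by
  cases σ with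
  | mid q φ => cases φ <;> simp [form]
  | iacc => exact absurd rfl h
  | idd => simp [form]

lemma step1 (σ : IS Q) (i j : ℕ)
    (hA : consA M σ = 1 → 0 < i) (hB : consB M σ = 1 → 0 < j) :
    afun M (form σ i j) = form (istep M σ) (i - consA M σ) (j - consB M σ) := by
  cases σ with
  | iacc => simp [form, istep]
  | idd => simp [form, istep]
  | mid q φ =>
    cases φ with
    | true =>
      by_cases ha : Γ2.a ∉ M.τ q
      · have hi : 0 < i := hA (by simp [consA, ha])
        rcases hp : pick (M.δ q Γ2.a) with _ | q' <;>
          simp [afun, form, istep, consA, consB, ha, hi, hp]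
      · push_neg at ha
        by_cases hb : Γ2.b ∉ M.τ q
        · have hj : 0 < j := hB (by simp [consB, ha, hb])
          rcases hp : pick (M.δ q Γ2.b) with _ | q' <;>
            simp [afun, form, istep, consA, consB, ha, hb, hj, hp]
        · push_neg at hb
          rcases hend : M.δend q with S | _
          · rcases hp : pick S with _ | q' <;>
              simp [afun, form, istep, consA, consB, ha, hb, hend, hp]
          · simp [afun, form, istep, consA, consB, ha, hb, hend]
    | false =>
      by_cases hb : Γ2.b ∉ M.τ q
      · have hj : 0 < j := hB (by simp [consB, hb])
        rcases hp : pick (M.δ q Γ2.b) with _ | q' <;>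
          simp [afun, form, istep, consA, consB, hb, hj, hp]
      · push_neg at hb
        rcases hend : M.δend q with S | _
        · rcases hp : pick S with _ | q' <;>
            simp [afun, form, istep, consA, consB, hb, hend, hp]
        · simp [afun, form, istep, consA, consB, hb, hend]


lemma dd_not_acc {X : AC Q} {T : ℕ} (hT : (afun M)^[T] X = .dd) :
    ¬ ∃ n, (afun M)^[n] X = .acc := by
  rintro ⟨n, hn⟩
  rcases le_or_gt n T with h | h
  · have h2 : (afun M)^[T] X = .acc := by
      rw [show T = (T - n) + n by omega, Function.iterate_add_apply, hn, iter_acc]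
    rw [h2] at hT
    cases hT
  · have h2 : (afun M)^[n] X = .dd := by
      rw [show n = (n - T) + T by omega, Function.iterate_add_apply, hT, iter_dd]
    rw [h2] at hn
    cases hn

lemma iter_period {α : Type} (f : α → α) (x : α) (t₁ t₂ : ℕ)
    (hle : t₁ ≤ t₂) (h : f^[t₁] x = f^[t₂] x) :
    ∀ t, t₁ ≤ t → f^[t + (t₂ - t₁)] x = f^[t] x := by
  intro t ht
  have e1 : t + (t₂ - t₁) = (t - t₁) + t₂ := by omega
  have e2 : t = (t - t₁) + t₁ := by omega
  rw [e1, Function.iterate_add_apply, ← h, ← Function.iterate_add_apply, ← e2]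

section OneCounter

variable (step : IS Q → IS Q) (cA : IS Q → ℕ) (fm : IS Q → ℕ → AC Q)

/-- the one-counter bridge: as long as the counter has not been exhausted,
the abstract run follows the ideal path -/
lemma br1c
    (hstep1 : ∀ σ m, (cA σ = 1 → 0 < m) → afun M (fm σ m) = fm (step σ) (m - cA σ))
    (σ0 : IS Q) (m : ℕ) :
    ∀ t, (∀ t' < t, cA (step^[t'] σ0) = 1 → cnt (fun u => cA (step^[u] σ0)) t' < m) →
    (afun M)^[t] (fm σ0 m) = fm (step^[t] σ0) (m - cnt (fun u => cA (step^[u] σ0)) t) := by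
  set g := fun u => cA (step^[u] σ0) with hg
  intro t
  induction t with
  | zero => simp [cnt]
  | succ t ih =>
    intro hG
    rw [Function.iterate_succ_apply', ih (fun u hu => hG u (by omega))]
    rw [hstep1 _ _ ?hpos]
    case hpos =>
      intro hc
      have := hG t (by omega) hc
      omega
    rw [Function.iterate_succ_apply' step t σ0]
    congr 1
    show m - cnt g t - g t = m - (cnt g t + g t)
    omega

lemma one_counter_per [Finite Q]
    (hstep1 : ∀ σ m, (cA σ = 1 → 0 < m) → afun M (fm σ m) = fm (step σ) (m - cA σ))
    (hiacc : ∀ m, fm .iacc m = .acc)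
    (hidd : ∀ m, fm .idd m = .dd)
    (hne : ∀ q φ m, fm (.mid q φ) m ≠ .acc)
    (hexh0 : ∀ q φ, fm (.mid q φ) 0 = .st q 0 0 0)
    (hcons1 : ∀ σ, cA σ ≤ 1)
    (σ0 : IS Q) :
    ∃ α, 1 ≤ α ∧ ∃ θ, ∀ m, θ ≤ m →
      ((∃ n, (afun M)^[n] (fm σ0 m) = .acc) ↔
       (∃ n, (afun M)^[n] (fm σ0 (m + α)) = .acc)) := by
  classical
  set g := fun u => cA (step^[u] σ0) with hgdef
  have hg1 : ∀ t, g t ≤ 1 := fun t => hcons1 _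
  have hbr := br1c M step cA fm hstep1 σ0
  simp only [← hgdef] at hbr
  by_cases hacc : ∃ T, step^[T] σ0 = IS.iacc
  · obtain ⟨T, hT⟩ := hacc
    refine ⟨1, le_refl 1, T + 1, fun m hm => ?_⟩
    have key : ∀ m', T + 1 ≤ m' → ∃ n, (afun M)^[n] (fm σ0 m') = .acc := by
      intro m' hm'
      refine ⟨T, ?_⟩
      rw [hbr m' T (fun t' ht' _ => by have := cnt_le_self g hg1 t'; omega)]
      rw [hT, hiacc]
    exact iff_of_true (key m hm) (key (m+1) (by omega))
  · by_cases hdd : ∃ T, step^[T] σ0 = IS.idd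
    · obtain ⟨T, hT⟩ := hdd
      refine ⟨1, le_refl 1, T + 1, fun m hm => ?_⟩
      have key : ∀ m', T + 1 ≤ m' → ¬ ∃ n, (afun M)^[n] (fm σ0 m') = .acc := by
        intro m' hm'
        apply dd_not_acc M (T := T)
        rw [hbr m' T (fun t' ht' _ => by have := cnt_le_self g hg1 t'; omega)]
        rw [hT, hidd]
      exact iff_of_false (key m hm) (key (m+1) (by omega))
    · have hmid : ∀ t, ∃ q φ, step^[t] σ0 = IS.mid q φ := by
        intro t
        cases hPt : step^[t] σ0 with
        | mid q φ => exact ⟨q, φ, rfl⟩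
        | iacc => exact absurd ⟨t, hPt⟩ hacc
        | idd => exact absurd ⟨t, hPt⟩ hdd
      obtain ⟨x, y, hxy, hPeq⟩ :=
        Finite.exists_ne_map_eq_of_infinite (fun t => step^[t] σ0)
      obtain ⟨t₁, t₂, hlt, ht12⟩ :
          ∃ t₁ t₂, t₁ < t₂ ∧ step^[t₁] σ0 = step^[t₂] σ0 := by
        rcases lt_or_gt_of_ne hxy with h | h
        · exact ⟨x, y, h, hPeq⟩
        · exact ⟨y, x, h, hPeq.symm⟩
      set c := t₂ - t₁ with hcdef
      have hc1 : 1 ≤ c := by omega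
      have hPper : ∀ t, t₁ ≤ t → step^[t + c] σ0 = step^[t] σ0 :=
        iter_period step σ0 t₁ t₂ (by omega) ht12
      have hgper : ∀ t, t₁ ≤ t → g (t + c) = g t := by
        intro t ht
        show cA _ = cA _
        rw [hPper t ht]
      obtain ⟨A, hA⟩ := Nat.exists_eq_add_of_le (cnt_mono g (by omega : t₁ ≤ t₁ + c))
      have hsub : cnt g (t₁ + c) - cnt g t₁ = A := by omega
      have hCper : ∀ d, cnt g (t₁ + d + c) = cnt g (t₁ + d) + A := by
        intro d
        rw [cnt_period g t₁ c hgper d, hsub]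
      have hCyc : ∀ k, cnt g (t₁ + k * c) = cnt g t₁ + k * A := by
        intro k
        rw [cnt_cycles g t₁ c hgper k, hsub]
      by_cases hA0 : A = 0
      · have hCb : ∀ t, cnt g t ≤ t₁ + c := by
          intro t
          induction t using Nat.strong_induction_on with
          | _ t ih =>
            rcases le_or_gt t (t₁ + c) with h | h
            · exact le_trans (cnt_le_self g hg1 t) h
            · have e : t = t₁ + (t - c - t₁) + c := by omega
              have h2 := hCper (t - c - t₁)
              rw [hA0] at h2
              have h3 := ih (t₁ + (t - c - t₁)) (by omega)
              rw [e, h2]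
              omega
        refine ⟨1, le_refl 1, t₁ + c + 1, fun m hm => ?_⟩
        have key : ∀ m', t₁ + c + 1 ≤ m' → ¬ ∃ n, (afun M)^[n] (fm σ0 m') = .acc := by
          rintro m' hm' ⟨n, hn⟩
          rw [hbr m' n (fun t' _ _ => by have := hCb t'; omega)] at hn
          obtain ⟨q, φ, hq⟩ := hmid n
          rw [hq] at hn
          exact hne q φ _ hn
        exact iff_of_false (key m hm) (key (m+1) (by omega))
      · have hA1 : 1 ≤ A := by omega
        have hCunb : ∀ m, ∃ T, m < cnt g T := by
          intro m
          refine ⟨t₁ + (m+1) * c, ?_⟩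
          rw [hCyc (m+1)]
          have h4 : (m+1) * 1 ≤ (m+1) * A := Nat.mul_le_mul_left _ hA1
          omega
        have hex : ∀ m, ∃ t, g t = 1 ∧ cnt g t = m := by
          intro m
          obtain ⟨T, hT⟩ := hCunb m
          obtain ⟨t, _, h1, h2⟩ := cnt_cross g hg1 m T hT
          exact ⟨t, h1, h2⟩
        have hexh_spec : ∀ m, g (Nat.find (hex m)) = 1 ∧ cnt g (Nat.find (hex m)) = m :=
          fun m => Nat.find_spec (hex m)
        have hguard : ∀ m, ∀ t' < Nat.find (hex m), g t' = 1 → cnt g t' < m := by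
          intro m t' ht' h1
          rcases lt_or_ge (cnt g t') m with h | h
          · exact h
          · exfalso
            have hle : cnt g t' ≤ m := by
              have h5 := cnt_mono g (le_of_lt ht')
              have h6 := (hexh_spec m).2
              omega
            have h7 : cnt g t' = m := le_antisymm hle h
            exact absurd ht' (not_lt.mpr (Nat.find_le ⟨h1, h7⟩))
        have hiter : ∀ m, ∃ q' φ', step^[Nat.find (hex m)] σ0 = IS.mid q' φ' ∧
            (afun M)^[Nat.find (hex m)] (fm σ0 m) = .st q' 0 0 0 := by
          intro m
          obtain ⟨q', φ', hq'⟩ := hmid (Nat.find (hex m))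
          refine ⟨q', φ', hq', ?_⟩
          rw [hbr m (Nat.find (hex m)) (fun t' ht' h1 => hguard m t' ht' h1)]
          rw [hq', (hexh_spec m).2, Nat.sub_self, hexh0 q' φ']
        refine ⟨A, hA1, cnt g (t₁ + c) + 1, fun m hm => ?_⟩
        -- exhaustion times are beyond the cycle start
        have hbig : ∀ m', cnt g (t₁ + c) < m' → t₁ + c < Nat.find (hex m') := by
          intro m' hm'
          by_contra hle
          push_neg at hle
          have := cnt_mono g hle
          have h6 := (hexh_spec m').2
          omega
        have hshift : Nat.find (hex (m + A)) = Nat.find (hex m) + c := by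
          have hm_t1 : t₁ ≤ Nat.find (hex m) := by
            have := hbig m (by omega)
            omega
          have hub : Nat.find (hex (m + A)) ≤ Nat.find (hex m) + c := by
            apply Nat.find_le
            constructor
            · rw [hgper _ hm_t1, (hexh_spec m).1]
            · have h8 := hCper (Nat.find (hex m) - t₁)
              have e : t₁ + (Nat.find (hex m) - t₁) = Nat.find (hex m) := by omega
              rw [e] at h8
              rw [h8, (hexh_spec m).2]
          have hlb : Nat.find (hex m) + c ≤ Nat.find (hex (m + A)) := by
            have h1 := hexh_spec (m + A)
            set t'' := Nat.find (hex (m + A)) with ht''def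
            have ht'' : t₁ + c < t'' := hbig (m + A) (by omega)
            have hg'' : g (t'' - c) = 1 := by
              have := hgper (t'' - c) (by omega)
              rw [show t'' - c + c = t'' by omega] at this
              rw [← this, h1.1]
            have hC'' : cnt g (t'' - c) = m := by
              have h8 := hCper (t'' - c - t₁)
              rw [show t₁ + (t'' - c - t₁) = t'' - c by omega] at h8
              rw [show t'' - c + c = t'' by omega] at h8
              have := h1.2
              omega
            have hfle : Nat.find (hex m) ≤ t'' - c :=
              Nat.find_le (show g (t'' - c) = 1 ∧ cnt g (t'' - c) = m from ⟨hg'', hC''⟩)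
            omega
          omega
        obtain ⟨q', φ', hq', hit⟩ := hiter m
        obtain ⟨q'', φ'', hq'', hit2⟩ := hiter (m + A)
        have hsame : q'' = q' := by
          rw [hshift] at hq''
          have hm_t1 : t₁ ≤ Nat.find (hex m) := by
            have := hbig m (by omega)
            omega
          rw [hPper _ hm_t1, hq'] at hq''
          cases hq''
          rfl
        rw [acc_from_later M (Nat.find (hex m)) (X := fm σ0 m), hit]
        rw [acc_from_later M (Nat.find (hex (m + A))) (X := fm σ0 (m + A)), hit2, hsame]

end OneCounter


/-! ### pure-a and pure-b one-letter systems -/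

noncomputable def endmoveI (q : Q) : IS Q :=
  match M.δend q with
  | .accept => .iacc
  | .cont S => ((pick S).map (fun q' => IS.mid q' true)).getD .idd

noncomputable def astep : IS Q → IS Q
  | .mid q true =>
    if Γ2.a ∉ M.τ q then
      ((pick (M.δ q Γ2.a)).map (fun q' => IS.mid q' true)).getD .idd
    else endmoveI M q
  | .mid q false => endmoveI M q
  | .iacc => .iacc
  | .idd => .idd

noncomputable def aconsA : IS Q → ℕ
  | .mid q true => if Γ2.a ∉ M.τ q then 1 else 0
  | _ => 0

def aform : IS Q → ℕ → AC Q
  | .mid q true, m => .st q 0 m 0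
  | .mid q false, m => .st q m 0 0
  | .iacc, _ => .acc
  | .idd, _ => .dd

noncomputable def bstep : IS Q → IS Q
  | .mid q _ =>
    if Γ2.b ∉ M.τ q then
      ((pick (M.δ q Γ2.b)).map (fun q' => IS.mid q' true)).getD .idd
    else endmoveI M q
  | .iacc => .iacc
  | .idd => .idd

noncomputable def bconsB : IS Q → ℕ
  | .mid q _ => if Γ2.b ∉ M.τ q then 1 else 0
  | _ => 0

def bform : IS Q → ℕ → AC Q
  | .mid q _, m => .st q 0 0 m
  | .iacc, _ => .acc
  | .idd, _ => .dd

lemma stepA (σ : IS Q) (m : ℕ) (hpos : aconsA M σ = 1 → 0 < m) :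
    afun M (aform σ m) = aform (astep M σ) (m - aconsA M σ) := by
  cases σ with
  | iacc => simp [aform, astep]
  | idd => simp [aform, astep]
  | mid q φ =>
    cases φ with
    | true =>
      by_cases ha : Γ2.a ∉ M.τ q
      · have hm : 0 < m := hpos (by simp [aconsA, ha])
        rcases hp : pick (M.δ q Γ2.a) with _ | q' <;>
          simp [afun, aform, astep, aconsA, ha, hm, hp]
      · push_neg at ha
        rcases hend : M.δend q with S | _
        · rcases hp : pick S with _ | q' <;>
            simp [afun, aform, astep, endmoveI, aconsA, ha, hend, hp]
        · simp [afun, aform, astep, endmoveI, aconsA, ha, hend]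
    | false =>
      rcases hend : M.δend q with S | _
      · rcases hp : pick S with _ | q' <;>
          simp [afun, aform, astep, endmoveI, aconsA, hend, hp]
      · simp [afun, aform, astep, endmoveI, aconsA, hend]

lemma stepB (σ : IS Q) (m : ℕ) (hpos : bconsB M σ = 1 → 0 < m) :
    afun M (bform σ m) = bform (bstep M σ) (m - bconsB M σ) := by
  cases σ with
  | iacc => simp [bform, bstep]
  | idd => simp [bform, bstep]
  | mid q φ =>
    by_cases hb : Γ2.b ∉ M.τ q
    · have hm : 0 < m := hpos (by cases φ <;> simp [bconsB, hb])
      rcases hp : pick (M.δ q Γ2.b) with _ | q' <;> cases φ <;>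
        simp [afun, bform, bstep, bconsB, hb, hm, hp]
    · push_neg at hb
      rcases hend : M.δend q with S | _
      · rcases hp : pick S with _ | q' <;> cases φ <;>
          simp [afun, bform, bstep, endmoveI, bconsB, hb, hend, hp]
      · cases φ <;> simp [afun, bform, bstep, endmoveI, bconsB, hb, hend]

lemma form_aform (σ : IS Q) (i : ℕ) : form σ i 0 = aform σ i := by
  cases σ with
  | mid q φ => cases φ <;> rfl
  | iacc => rfl
  | idd => rfl

lemma form_bform (σ : IS Q) (j : ℕ) : form σ 0 j = bform σ j := by
  cases σ with
  | mid q φ => cases φ <;> rfl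
  | iacc => rfl
  | idd => rfl

/-- the two-counter bridge for the main ideal path -/
lemma br2 (σ0 : IS Q) (i j : ℕ) :
    ∀ t, (∀ t' < t,
        (consA M ((istep M)^[t'] σ0) = 1 →
          cnt (fun u => consA M ((istep M)^[u] σ0)) t' < i) ∧
        (consB M ((istep M)^[t'] σ0) = 1 →
          cnt (fun u => consB M ((istep M)^[u] σ0)) t' < j)) →
    (afun M)^[t] (form σ0 i j) =
      form ((istep M)^[t] σ0)
        (i - cnt (fun u => consA M ((istep M)^[u] σ0)) t)
        (j - cnt (fun u => consB M ((istep M)^[u] σ0)) t) := by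
  set ga := fun u => consA M ((istep M)^[u] σ0) with hga
  set gb := fun u => consB M ((istep M)^[u] σ0) with hgb
  intro t
  induction t with
  | zero => simp [cnt]
  | succ t ih =>
    intro hG
    rw [Function.iterate_succ_apply', ih (fun u hu => hG u (by omega))]
    rw [step1 M _ _ _ ?hA ?hB]
    case hA =>
      intro hc
      have := (hG t (by omega)).1 hc
      omega
    case hB =>
      intro hc
      have := (hG t (by omega)).2 hc
      omega
    rw [Function.iterate_succ_apply' (istep M) t σ0]
    congr 1
    · show i - cnt ga t - ga t = i - (cnt ga t + ga t)
      omega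
    · show j - cnt gb t - gb t = j - (cnt gb t + gb t)
      omega

lemma cnt_bdd (g : ℕ → ℕ) (hg1 : ∀ t, g t ≤ 1) (t₁ c : ℕ) (hc1 : 1 ≤ c)
    (hper : ∀ d, cnt g (t₁ + d + c) = cnt g (t₁ + d)) : ∀ t, cnt g t ≤ t₁ + c := by
  intro t
  induction t using Nat.strong_induction_on with
  | _ t ih =>
    rcases le_or_gt t (t₁ + c) with h | h
    · exact le_trans (cnt_le_self g hg1 t) h
    · have e : t = t₁ + (t - c - t₁) + c := by omega
      have h2 := hper (t - c - t₁)
      have h3 := ih (t₁ + (t - c - t₁)) (by omega)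
      rw [e, h2]
      omega


theorem part3 : ¬ AcceptedByNrDFAwtl
    ({ w : List Γ2 | w.count Γ2.a = w.count Γ2.b } ∪
     { w : List Γ2 | w.count Γ2.b = 2 * w.count Γ2.a }) := by
  rintro ⟨Q, instF, M, hdet, hlang⟩
  classical
  obtain ⟨q0, hI⟩ := hdet.1
  have hca : ∀ i j : ℕ, (List.replicate i Γ2.a ++ List.replicate j Γ2.b).count Γ2.a = i := by
    intro i j
    simp [List.count_append, List.count_replicate]
  have hcb : ∀ i j : ℕ, (List.replicate i Γ2.a ++ List.replicate j Γ2.b).count Γ2.b = j := by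
    intro i j
    simp [List.count_append, List.count_replicate]
  have hACC : ∀ i j : ℕ,
      (∃ n, (afun M)^[n] (AC.st q0 0 i j) = .acc) ↔ (i = j ∨ j = 2 * i) := by
    intro i j
    rw [acc_iff_rtg M hdet q0 0 i j]
    constructor
    · intro h
      have hmem : (List.replicate i Γ2.a ++ List.replicate j Γ2.b) ∈ M.lang :=
        ⟨q0, by rw [hI]; rfl, h⟩
      rw [hlang] at hmem
      rcases hmem with hm | hm
      · left
        have h1 := hca i j
        have h2 := hcb i j
        simp only [Set.mem_setOf_eq] at hm
        omega
      · right
        have h1 := hca i j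
        have h2 := hcb i j
        simp only [Set.mem_setOf_eq] at hm
        omega
    · intro h
      have hmem : (List.replicate i Γ2.a ++ List.replicate j Γ2.b) ∈ M.lang := by
        rw [hlang]
        rcases h with h | h
        · left
          simp only [Set.mem_setOf_eq, hca, hcb]
          omega
        · right
          simp only [Set.mem_setOf_eq, hca, hcb]
          omega
      obtain ⟨q₀', hq₀', hrtg⟩ := hmem
      rw [hI] at hq₀'
      have : q₀' = q0 := hq₀'
      subst this
      exact hrtg
  -- the ideal-path machinery
  have hbr := br2 M (IS.mid q0 true)
  set σ0 : IS Q := IS.mid q0 true with hσ0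
  set ga := fun u => consA M ((istep M)^[u] σ0) with hga
  set gb := fun u => consB M ((istep M)^[u] σ0) with hgb
  have hga1 : ∀ t, ga t ≤ 1 := fun t => consA_le_one M _
  have hgb1 : ∀ t, gb t ≤ 1 := fun t => consB_le_one M _
  have hform0 : ∀ i j : ℕ, form σ0 i j = AC.st q0 0 i j := fun i j => rfl
  by_cases hacc : ∃ T, (istep M)^[T] σ0 = IS.iacc
  · obtain ⟨T, hT⟩ := hacc
    have hkey : ∃ n, (afun M)^[n] (AC.st q0 0 (T+2) (T+3)) = .acc := by
      refine ⟨T, ?_⟩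
      have hb := hbr (T+2) (T+3) T (fun t' ht' =>
        ⟨fun _ => by have := cnt_le_self ga hga1 t'; omega,
         fun _ => by have := cnt_le_self gb hgb1 t'; omega⟩)
      rw [hform0] at hb
      rw [hb, hT]
      rfl
    rw [hACC] at hkey
    omega
  · by_cases hddT : ∃ T, (istep M)^[T] σ0 = IS.idd
    · obtain ⟨T, hT⟩ := hddT
      have htrue : ∃ n, (afun M)^[n] (AC.st q0 0 (T+1) (T+1)) = .acc :=
        (hACC (T+1) (T+1)).mpr (Or.inl rfl)
      have hb : (afun M)^[T] (AC.st q0 0 (T+1) (T+1)) = .dd := by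
        have hb := hbr (T+1) (T+1) T (fun t' ht' =>
          ⟨fun _ => by have := cnt_le_self ga hga1 t'; omega,
           fun _ => by have := cnt_le_self gb hgb1 t'; omega⟩)
        rw [hform0] at hb
        rw [hb, hT]
        rfl
      exact (dd_not_acc M hb) htrue
    · -- no sinks on the ideal path
      have hmid : ∀ t, ∃ q φ, (istep M)^[t] σ0 = IS.mid q φ := by
        intro t
        cases hPt : (istep M)^[t] σ0 with
        | mid q φ => exact ⟨q, φ, rfl⟩
        | iacc => exact absurd ⟨t, hPt⟩ hacc
        | idd => exact absurd ⟨t, hPt⟩ hddT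
      obtain ⟨x, y, hxy, hPeq⟩ :=
        Finite.exists_ne_map_eq_of_infinite (fun t => (istep M)^[t] σ0)
      obtain ⟨t₁, t₂, hlt, ht12⟩ :
          ∃ t₁ t₂, t₁ < t₂ ∧ (istep M)^[t₁] σ0 = (istep M)^[t₂] σ0 := by
        rcases lt_or_gt_of_ne hxy with h | h
        · exact ⟨x, y, h, hPeq⟩
        · exact ⟨y, x, h, hPeq.symm⟩
      set c := t₂ - t₁ with hcdef
      have hc1 : 1 ≤ c := by omega
      have hPper : ∀ t, t₁ ≤ t → (istep M)^[t + c] σ0 = (istep M)^[t] σ0 :=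
        iter_period (istep M) σ0 t₁ t₂ (by omega) ht12
      have hgaper : ∀ t, t₁ ≤ t → ga (t + c) = ga t := by
        intro t ht
        show consA M _ = consA M _
        rw [hPper t ht]
      have hgbper : ∀ t, t₁ ≤ t → gb (t + c) = gb t := by
        intro t ht
        show consB M _ = consB M _
        rw [hPper t ht]
      obtain ⟨A, hAe⟩ := Nat.exists_eq_add_of_le (cnt_mono ga (by omega : t₁ ≤ t₁ + c))
      obtain ⟨B, hBe⟩ := Nat.exists_eq_add_of_le (cnt_mono gb (by omega : t₁ ≤ t₁ + c))
      have hsubA : cnt ga (t₁ + c) - cnt ga t₁ = A := by omega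
      have hsubB : cnt gb (t₁ + c) - cnt gb t₁ = B := by omega
      have hCAper : ∀ d, cnt ga (t₁ + d + c) = cnt ga (t₁ + d) + A := by
        intro d
        rw [cnt_period ga t₁ c hgaper d, hsubA]
      have hCBper : ∀ d, cnt gb (t₁ + d + c) = cnt gb (t₁ + d) + B := by
        intro d
        rw [cnt_period gb t₁ c hgbper d, hsubB]
      have hCAcyc : ∀ k, cnt ga (t₁ + k * c) = cnt ga t₁ + k * A := by
        intro k
        rw [cnt_cycles ga t₁ c hgaper k, hsubA]
      have hCBcyc : ∀ k, cnt gb (t₁ + k * c) = cnt gb t₁ + k * B := by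
        intro k
        rw [cnt_cycles gb t₁ c hgbper k, hsubB]
      -- pure-letter periodicity data
      have hPERa : ∀ σs : IS Q, ∃ α, 1 ≤ α ∧ ∃ θ, ∀ m, θ ≤ m →
          ((∃ n, (afun M)^[n] (aform σs m) = .acc) ↔
           (∃ n, (afun M)^[n] (aform σs (m + α)) = .acc)) := by
        intro σs
        refine one_counter_per M (astep M) (aconsA M) aform (stepA M)
          (fun m => rfl) (fun m => rfl) ?_ ?_ ?_ σs
        · intro q φ m
          cases φ <;> simp [aform]
        · intro q φ
          cases φ <;> rfl
        · intro σ
          cases σ with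
          | mid q φ => cases φ <;> simp [aconsA] <;> split <;> simp
          | iacc => simp [aconsA]
          | idd => simp [aconsA]
      have hPERb : ∀ σs : IS Q, ∃ α, 1 ≤ α ∧ ∃ θ, ∀ m, θ ≤ m →
          ((∃ n, (afun M)^[n] (bform σs m) = .acc) ↔
           (∃ n, (afun M)^[n] (bform σs (m + α)) = .acc)) := by
        intro σs
        refine one_counter_per M (bstep M) (bconsB M) bform (stepB M)
          (fun m => rfl) (fun m => rfl) ?_ ?_ ?_ σs
        · intro q φ m
          simp [bform]
        · intro q φ
          rfl
        · intro σ
          cases σ with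
          | mid q φ => simp [bconsB]; split <;> simp
          | iacc => simp [bconsB]
          | idd => simp [bconsB]
      choose αa hαa1 θa hθa using hPERa
      choose αb hαb1 θb hθb using hPERb
      letI : Fintype (IS Q) := Fintype.ofFinite _
      set Θ := max (Finset.univ.sup θa) (Finset.univ.sup θb) with hΘdef
      have hΘa : ∀ σ, θa σ ≤ Θ := fun σ =>
        le_trans (Finset.le_sup (Finset.mem_univ σ)) (le_max_left _ _)
      have hΘb : ∀ σ, θb σ ≤ Θ := fun σ =>
        le_trans (Finset.le_sup (Finset.mem_univ σ)) (le_max_right _ _)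
      by_cases hAB : A = 0 ∧ B = 0
      · -- no consumption: the machine loops, rejecting everything large
        have hbda : ∀ t, cnt ga t ≤ t₁ + c :=
          cnt_bdd ga hga1 t₁ c hc1 (fun d => by rw [hCAper d, hAB.1, Nat.add_zero])
        have hbdb : ∀ t, cnt gb t ≤ t₁ + c :=
          cnt_bdd gb hgb1 t₁ c hc1 (fun d => by rw [hCBper d, hAB.2, Nat.add_zero])
        obtain ⟨n, hn⟩ := (hACC (t₁+c+1) (t₁+c+1)).mpr (Or.inl rfl)
        have hb := hbr (t₁+c+1) (t₁+c+1) n (fun t' ht' =>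
          ⟨fun _ => by have := hbda t'; omega, fun _ => by have := hbdb t'; omega⟩)
        rw [hform0] at hb
        rw [hb] at hn
        obtain ⟨q, φ, hq⟩ := hmid n
        rw [hq] at hn
        exact form_ne_acc (by simp) hn
      · rcases Nat.lt_or_ge A B with hABlt | hABge
        · -- B > A : fix j = n, vary i
          set X := t₁ + A + Θ + 1 with hXdef
          set n := (A+1) * X with hndef
          have hBpos : 1 ≤ B := by omega
          have hn1 : X ≤ n := by
            calc X = 1 * X := (one_mul X).symm
            _ ≤ (A+1) * X := Nat.mul_le_mul_right X (by omega)
          have hcross : n < cnt gb (t₁ + (n / B + 1) * c) := by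
            rw [hCBcyc (n / B + 1)]
            have h5 : n < (n / B + 1) * B := by
              have hdm := Nat.div_add_mod n B
              have hml : n % B < B := Nat.mod_lt _ (by omega)
              calc n = B * (n / B) + n % B := (Nat.div_add_mod n B).symm
              _ < B * (n / B) + B := by omega
              _ = (n / B + 1) * B := by ring
            omega
          have hexB : ∃ t, gb t = 1 ∧ cnt gb t = n := by
            obtain ⟨t, _, h1, h2⟩ := cnt_cross gb hgb1 n _ hcross
            exact ⟨t, h1, h2⟩
          have hspec := Nat.find_spec hexB
          set tstar := Nat.find hexB with htsdef
          have hguardB : ∀ t' < tstar, gb t' = 1 → cnt gb t' < n := by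
            intro t' ht' h1
            rcases lt_or_ge (cnt gb t') n with h | h
            · exact h
            · exfalso
              have h6 := cnt_mono gb (le_of_lt ht')
              have h8 := hspec.2
              have h7 : cnt gb t' = n := by omega
              have h9 := Nat.find_min' hexB (show gb t' = 1 ∧ cnt gb t' = n from ⟨h1, h7⟩)
              rw [← htsdef] at h9
              omega
          have htle : tstar < t₁ + (n / B + 1) * c := by
            obtain ⟨t, htl, h1, h2⟩ := cnt_cross gb hgb1 n _ hcross
            have h9 := Nat.find_min' hexB (show gb t = 1 ∧ cnt gb t = n from ⟨h1, h2⟩)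
            rw [← htsdef] at h9
            omega
          set K := cnt ga tstar with hKdef
          have hK : K ≤ t₁ + (n / B + 1) * A := by
            have h6 := cnt_mono ga (le_of_lt htle)
            rw [hCAcyc (n / B + 1)] at h6
            have h7 := cnt_le_self ga hga1 t₁
            omega
          have hdiv : n / B ≤ X := by
            have h6 : n / (A+1) = X := by
              rw [hndef]
              exact Nat.mul_div_cancel_left X (by omega)
            have h7 : n / B ≤ n / (A+1) := Nat.div_le_div_left (by omega) (by omega)
            omega
          have hKn : K + Θ + 1 ≤ n := by
            have h8 : (n / B + 1) * A ≤ (X + 1) * A := Nat.mul_le_mul_right _ (by omega)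
            have h9 : (X + 1) * A = X * A + A := by ring
            have h10 : n = X * A + X := by rw [hndef]; ring
            omega
          obtain ⟨qs, φs, hqs⟩ := hmid tstar
          have hfam : ∀ i, K < i →
              ((∃ n', (afun M)^[n'] (AC.st q0 0 i n) = .acc) ↔
               (∃ n', (afun M)^[n'] (aform (IS.mid qs φs) (i - K)) = .acc)) := by
            intro i hi
            have hb := hbr i n tstar (fun t' ht' =>
              ⟨fun _ => by
                have h6 := cnt_mono ga (le_of_lt ht')
                omega,
               fun h1 => hguardB t' ht' h1⟩)
            rw [hform0, hspec.2, Nat.sub_self, hqs, form_aform] at hb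
            rw [acc_from_later M tstar (X := AC.st q0 0 i n), hb]
          have htrue : ∃ n', (afun M)^[n'] (AC.st q0 0 n n) = .acc :=
            (hACC n n).mpr (Or.inl rfl)
          have h2 := (hfam n (by omega)).mp htrue
          have h3 := (hθa (IS.mid qs φs) (n - K) (by
            have := hΘa (IS.mid qs φs)
            omega)).mp h2
          have h4 : ∃ n', (afun M)^[n'] (AC.st q0 0 (n + αa (IS.mid qs φs)) n) = .acc := by
            apply (hfam (n + αa (IS.mid qs φs)) (by omega)).mpr
            rw [show n + αa (IS.mid qs φs) - K = n - K + αa (IS.mid qs φs) by omega]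
            exact h3
          rw [hACC] at h4
          have hα1 := hαa1 (IS.mid qs φs)
          omega
        · -- B ≤ A, and A ≥ 1 : fix i = n, vary j
          have hApos : 1 ≤ A := by
            rcases Nat.eq_zero_or_pos A with h | h
            · exfalso
              exact hAB ⟨h, by omega⟩
            · exact h
          set n := t₁ + A + B + Θ + 1 with hndef
          have hcross : n < cnt ga (t₁ + (n / A + 1) * c) := by
            rw [hCAcyc (n / A + 1)]
            have h5 : n < (n / A + 1) * A := by
              have hdm := Nat.div_add_mod n A
              have hml : n % A < A := Nat.mod_lt _ (by omega)
              calc n = A * (n / A) + n % A := (Nat.div_add_mod n A).symm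
              _ < A * (n / A) + A := by omega
              _ = (n / A + 1) * A := by ring
            omega
          have hexA : ∃ t, ga t = 1 ∧ cnt ga t = n := by
            obtain ⟨t, _, h1, h2⟩ := cnt_cross ga hga1 n _ hcross
            exact ⟨t, h1, h2⟩
          have hspec := Nat.find_spec hexA
          set tstar := Nat.find hexA with htsdef
          have hguardA : ∀ t' < tstar, ga t' = 1 → cnt ga t' < n := by
            intro t' ht' h1
            rcases lt_or_ge (cnt ga t') n with h | h
            · exact h
            · exfalso
              have h6 := cnt_mono ga (le_of_lt ht')
              have h8 := hspec.2
              have h7 : cnt ga t' = n := by omega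
              have h9 := Nat.find_min' hexA (show ga t' = 1 ∧ cnt ga t' = n from ⟨h1, h7⟩)
              rw [← htsdef] at h9
              omega
          have htle : tstar < t₁ + (n / A + 1) * c := by
            obtain ⟨t, htl, h1, h2⟩ := cnt_cross ga hga1 n _ hcross
            have h9 := Nat.find_min' hexA (show ga t = 1 ∧ cnt ga t = n from ⟨h1, h2⟩)
            rw [← htsdef] at h9
            omega
          set K := cnt gb tstar with hKdef
          have hK : K ≤ t₁ + (n / A + 1) * B := by
            have h6 := cnt_mono gb (le_of_lt htle)
            rw [hCBcyc (n / A + 1)] at h6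
            have h7 := cnt_le_self gb hgb1 t₁
            omega
          have hKn : K + Θ + 1 ≤ 2 * n := by
            have h8 : (n / A + 1) * B = (n / A) * B + B := by ring
            have h9 : (n / A) * B ≤ (n / A) * A := Nat.mul_le_mul_left _ hABge
            have h10 : (n / A) * A ≤ n := by
              have := Nat.div_add_mod n A
              have h11 : A * (n / A) = (n / A) * A := Nat.mul_comm _ _
              omega
            omega
          obtain ⟨qs, φs, hqs⟩ := hmid tstar
          have hfam : ∀ j, K < j →
              ((∃ n', (afun M)^[n'] (AC.st q0 0 n j) = .acc) ↔
               (∃ n', (afun M)^[n'] (bform (IS.mid qs φs) (j - K)) = .acc)) := by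
            intro j hj
            have hb := hbr n j tstar (fun t' ht' =>
              ⟨fun h1 => hguardA t' ht' h1,
               fun _ => by
                have h6 := cnt_mono gb (le_of_lt ht')
                omega⟩)
            rw [hform0, hspec.2, Nat.sub_self, hqs, form_bform] at hb
            rw [acc_from_later M tstar (X := AC.st q0 0 n j), hb]
          have htrue : ∃ n', (afun M)^[n'] (AC.st q0 0 n (2 * n)) = .acc :=
            (hACC n (2 * n)).mpr (Or.inr rfl)
          have h2 := (hfam (2 * n) (by omega)).mp htrue
          have h3 := (hθb (IS.mid qs φs) (2 * n - K) (by
            have := hΘb (IS.mid qs φs)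
            omega)).mp h2
          have h4 : ∃ n', (afun M)^[n'] (AC.st q0 0 n (2 * n + αb (IS.mid qs φs))) = .acc := by
            apply (hfam (2 * n + αb (IS.mid qs φs)) (by omega)).mpr
            rw [show 2 * n + αb (IS.mid qs φs) - K = 2 * n - K + αb (IS.mid qs φs) by omega]
            exact h3
          rw [hACC] at h4
          have hα1 := hαb1 (IS.mid qs φs)
          omega

end Imp

/-- The languages `L₁ = {w ∈ {a,b}* : |w|_a = |w|_b}` and
`L₂ = {w ∈ {a,b}* : |w|_b = 2·|w|_a}` are each accepted by an nrDFAwtl, but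
their union is not accepted by any nrDFAwtl. -/
theorem nrDFAwtl_not_closed_under_union :
    AcceptedByNrDFAwtl { w : List Γ2 | w.count Γ2.a = w.count Γ2.b } ∧
    AcceptedByNrDFAwtl { w : List Γ2 | w.count Γ2.b = 2 * w.count Γ2.a } ∧
    ¬ AcceptedByNrDFAwtl
        ({ w : List Γ2 | w.count Γ2.a = w.count Γ2.b } ∪
         { w : List Γ2 | w.count Γ2.b = 2 * w.count Γ2.a }) :=
  ⟨M1sec.part1, M2sec.part2, Imp.part3⟩
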